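/- The series ∑_{n=0}^∞ (−1)ⁿ/((2n+1)³·C(2n,n)) equals −2i·∫₀¹ [Li₂(i·x/(1+x²)) − Li₂(−i·x/(1+x²))]/(1+x²) dx, where the integral of the complex-valued integrand is taken over the real interval [0,1]. -/

import Mathlib

/-- Polylogarithm of a complex argument, defined by its convergent series. -/
noncomputable def cLi (s : ℕ) (z : ℂ) : ℂ := ∑' n : ℕ, z ^ (n + 1) / ((n : ℂ) + 1) ^ s

/-!
For real `y` with `|y| < 1` the even powers cancel in `Li₂(iy) - Li₂(-iy)`, which leaves
`2i Ti₂(y)`, where `Ti₂(y) = ∑ (-1)ᵏ y^(2k+1) / (2k+1)²` is the inverse tangent integral.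
Since `|x / (1 + x²)| ≤ 1/2`, the series `Ti₂(x / (1 + x²)) / (1 + x²)` can be integrated
termwise over `[0, 1]`. The substitution `t = x² / (1 + x²)` turns the `k`-th integral into
`½ ∫₀^{1/2} (t(1-t))ᵏ dt = ¼ B(k+1, k+1) = 1 / (4 (2k+1) C(2k,k))`.
-/

open MeasureTheory Complex

open scoped Nat

theorem summable_cLi (s : ℕ) {z : ℂ} (hz : ‖z‖ < 1) :
    Summable fun n : ℕ => z ^ (n + 1) / ((n : ℂ) + 1) ^ s := by
  refine Summable.of_norm_bounded
    ((summable_geometric_of_lt_one (norm_nonneg z) hz).mul_left ‖z‖) fun n => ?_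
  have hn : 1 ≤ ‖(n : ℂ) + 1‖ ^ s := by
    rw [← Nat.cast_succ, Complex.norm_natCast]
    exact one_le_pow₀ (by simp)
  rw [norm_div, norm_pow, norm_pow, pow_succ']
  exact div_le_self (by positivity) hn

theorem cLi_sub_cLi_neg (s : ℕ) {z : ℂ} (hz : ‖z‖ < 1) :
    cLi s z - cLi s (-z) = 2 * ∑' k : ℕ, z ^ (2 * k + 1) / (2 * (k : ℂ) + 1) ^ s := by
  set f : ℕ → ℂ := fun n => (z ^ (n + 1) - (-z) ^ (n + 1)) / ((n : ℂ) + 1) ^ s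
  have hdiff : cLi s z - cLi s (-z) = ∑' n, f n := by
    rw [cLi, cLi, ← (summable_cLi s hz).tsum_sub (summable_cLi s (by rwa [norm_neg]))]
    simp only [f, sub_div]
  have hsupp : Function.support f ⊆ Set.range (fun k : ℕ => 2 * k) := by
    intro n hn
    obtain ⟨k, rfl | rfl⟩ := Nat.even_or_odd' n
    · exact ⟨k, rfl⟩
    · exact absurd (by simp [f, show 2 * k + 1 + 1 = 2 * (k + 1) by ring, pow_mul]) hn
  rw [hdiff, ← (mul_right_injective₀ two_ne_zero).tsum_eq hsupp, ← tsum_mul_left]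
  refine tsum_congr fun k => ?_
  simp only [f, Odd.neg_pow (odd_two_mul_add_one k)]
  push_cast
  ring

noncomputable def inverseTangentIntegral (s : ℕ) (y : ℝ) : ℝ :=
  ∑' k : ℕ, (-1) ^ k * y ^ (2 * k + 1) / (2 * (k : ℝ) + 1) ^ s

theorem norm_inverseTangentIntegral_term_le (s k : ℕ) {y : ℝ} (hy : |y| ≤ 1) :
    ‖(-1) ^ k * y ^ (2 * k + 1) / (2 * (k : ℝ) + 1) ^ s‖ ≤ |y| ^ k := by
  have hk : 1 ≤ (2 * (k : ℝ) + 1) ^ s := one_le_pow₀ (by linarith [k.cast_nonneg (α := ℝ)])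
  rw [norm_div, norm_mul, norm_pow, norm_pow, norm_pow, norm_neg, norm_one, one_pow, one_mul,
    Real.norm_eq_abs, Real.norm_of_nonneg (by positivity : (0 : ℝ) ≤ 2 * k + 1)]
  exact (div_le_self (by positivity) hk).trans
    (pow_le_pow_of_le_one (abs_nonneg y) hy (by omega))

theorem hasSum_inverseTangentIntegral (s : ℕ) {y : ℝ} (hy : |y| < 1) :
    HasSum (fun k : ℕ => (-1) ^ k * y ^ (2 * k + 1) / (2 * (k : ℝ) + 1) ^ s)
      (inverseTangentIntegral s y) :=
  (Summable.of_norm_bounded (summable_geometric_of_lt_one (abs_nonneg y) hy)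
    fun k => norm_inverseTangentIntegral_term_le s k hy.le).hasSum

theorem cLi_I_mul_sub_cLi_neg_I_mul (s : ℕ) {y : ℝ} (hy : |y| < 1) :
    cLi s (I * y) - cLi s (-(I * y)) = 2 * I * inverseTangentIntegral s y := by
  rw [cLi_sub_cLi_neg s (z := I * y) (by simpa using hy), mul_assoc]
  congr 1
  rw [inverseTangentIntegral, Complex.ofReal_tsum, ← tsum_mul_left]
  refine tsum_congr fun k => ?_
  rw [mul_pow, pow_succ, pow_mul, I_sq]
  push_cast
  ring

theorem abs_div_one_add_sq_le (x : ℝ) : |x / (1 + x ^ 2)| ≤ 1 / 2 := by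
  rw [abs_div, abs_of_pos (by positivity : (0 : ℝ) < 1 + x ^ 2), div_le_iff₀ (by positivity)]
  nlinarith [sq_abs x, sq_nonneg (|x| - 1)]

theorem integral_pow_mul_one_sub_pow (m n : ℕ) :
    ∫ t in (0 : ℝ)..1, t ^ m * (1 - t) ^ n = (m ! * n ! : ℝ) / (m + n + 1)! := by
  have hB := Complex.Gamma_mul_Gamma_eq_betaIntegral (s := m + 1) (t := n + 1)
    (by simp; positivity) (by simp; positivity)
  have hbeta :
      Complex.betaIntegral (m + 1) (n + 1) = ↑(∫ t in (0 : ℝ)..1, t ^ m * (1 - t) ^ n) := by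
    rw [Complex.betaIntegral, ← intervalIntegral.integral_ofReal]
    refine intervalIntegral.integral_congr fun t _ => ?_
    simp [← Complex.cpow_natCast]
  rw [show (m + 1 : ℂ) + (n + 1) = ((m + n + 1 : ℕ) : ℂ) + 1 by push_cast; ring,
    Complex.Gamma_nat_eq_factorial, Complex.Gamma_nat_eq_factorial,
    Complex.Gamma_nat_eq_factorial, hbeta] at hB
  rw [eq_div_iff (by positivity), mul_comm]
  exact_mod_cast hB.symm

theorem integral_zero_one_eq_two_mul_integral_zero_half {f : ℝ → ℝ}
    (hf : ∀ t, f (1 - t) = f t) (hint : IntervalIntegrable f volume 0 1) :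
    ∫ t in (0 : ℝ)..1, f t = 2 * ∫ t in (0 : ℝ)..1 / 2, f t := by
  have hreflect : ∫ t in (1 / 2 : ℝ)..1, f t = ∫ t in (0 : ℝ)..1 / 2, f t := by
    have h := intervalIntegral.integral_comp_sub_left (a := 1 / 2) (b := 1) f 1
    simp only [hf] at h
    norm_num at h
    exact h
  rw [← intervalIntegral.integral_add_adjacent_intervals (b := 1 / 2)
    (hint.mono_set (Set.uIcc_subset_uIcc (by simp) (by norm_num [Set.mem_uIcc])))
    (hint.mono_set (Set.uIcc_subset_uIcc (by norm_num [Set.mem_uIcc]) (by simp))),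
    hreflect, two_mul]

theorem integral_pow_div_one_add_sq_pow_eq_integral_zero_half (k : ℕ) :
    ∫ x in (0 : ℝ)..1, x ^ (2 * k + 1) / (1 + x ^ 2) ^ (2 * k + 2) =
      ∫ t in (0 : ℝ)..1 / 2, (t * (1 - t)) ^ k / 2 := by
  have hderiv (x : ℝ) :
      HasDerivAt (fun y : ℝ => y ^ 2 / (1 + y ^ 2)) (2 * x / (1 + x ^ 2) ^ 2) x := by
    refine ((hasDerivAt_pow 2 x).div ((hasDerivAt_pow 2 x).const_add 1)
      (by positivity)).congr_deriv ?_
    ring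
  have hsubst := intervalIntegral.integral_comp_mul_deriv (a := 0) (b := 1)
    (fun x _ => hderiv x)
    ((by fun_prop : Continuous fun x : ℝ => 2 * x).div (by fun_prop)
      fun x => by positivity).continuousOn
    (by fun_prop : Continuous fun t : ℝ => (t * (1 - t)) ^ k / 2)
  norm_num at hsubst
  rw [intervalIntegral.integral_div, ← hsubst]
  refine intervalIntegral.integral_congr fun x _ => ?_
  have hx : 1 + x ^ 2 ≠ 0 := by positivity
  have ht : x ^ 2 / (1 + x ^ 2) * (1 - x ^ 2 / (1 + x ^ 2)) = x ^ 2 / (1 + x ^ 2) ^ 2 := by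
    field_simp
    ring
  rw [ht, div_pow, ← pow_mul, ← pow_mul]
  field_simp
  ring

theorem integral_pow_div_one_add_sq_pow (k : ℕ) :
    ∫ x in (0 : ℝ)..1, x ^ (2 * k + 1) / (1 + x ^ 2) ^ (2 * k + 2) =
      (1 : ℝ) / (4 * (2 * k + 1) * Nat.centralBinom k) := by
  have hsymm := integral_zero_one_eq_two_mul_integral_zero_half
    (f := fun t : ℝ => t ^ k * (1 - t) ^ k) (fun t => by ring)
    ((by fun_prop : Continuous _).intervalIntegrable _ _)
  have hbinom : ((2 * k + 1)! : ℝ) = (2 * k + 1) * Nat.centralBinom k * k ! * k ! := by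
    have h := Nat.add_choose_mul_factorial_mul_factorial k k
    rw [← two_mul, ← Nat.centralBinom_eq_two_mul_choose] at h
    rw [Nat.factorial_succ, ← h]
    push_cast
    ring
  rw [integral_pow_div_one_add_sq_pow_eq_integral_zero_half, intervalIntegral.integral_div]
  simp_rw [mul_pow]
  rw [show ∫ t in (0 : ℝ)..1 / 2, t ^ k * (1 - t) ^ k =
      (∫ t in (0 : ℝ)..1, t ^ k * (1 - t) ^ k) / 2 by rw [hsymm]; ring,
    integral_pow_mul_one_sub_pow, ← two_mul, hbinom]
  field_simp
  ring

theorem hasSum_integral_inverseTangentIntegral :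
    HasSum (fun k : ℕ => (-1) ^ k / ((2 * (k : ℝ) + 1) ^ 3 * Nat.centralBinom k) / 4)
      (∫ x in (0 : ℝ)..1, inverseTangentIntegral 2 (x / (1 + x ^ 2)) / (1 + x ^ 2)) := by
  set F : ℕ → ℝ → ℝ := fun k x =>
    (-1) ^ k * (x / (1 + x ^ 2)) ^ (2 * k + 1) / (2 * (k : ℝ) + 1) ^ 2 / (1 + x ^ 2)
  have hF_integral (k : ℕ) : ∫ x in (0 : ℝ)..1, F k x =
      (-1) ^ k / ((2 * (k : ℝ) + 1) ^ 3 * Nat.centralBinom k) / 4 := by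
    have hF (x : ℝ) : F k x = (-1) ^ k / (2 * (k : ℝ) + 1) ^ 2 *
        (x ^ (2 * k + 1) / (1 + x ^ 2) ^ (2 * k + 2)) := by
      have : 1 + x ^ 2 ≠ 0 := by positivity
      simp only [F, div_pow]
      field_simp
      ring
    simp_rw [hF]
    rw [intervalIntegral.integral_const_mul, integral_pow_div_one_add_sq_pow]
    field_simp
  have hF_bound (k : ℕ) (x : ℝ) : ‖F k x‖ ≤ (1 / 2) ^ k := by
    have hy := abs_div_one_add_sq_le x
    calc ‖F k x‖
        ≤ ‖(-1) ^ k * (x / (1 + x ^ 2)) ^ (2 * k + 1) / (2 * (k : ℝ) + 1) ^ 2‖ := by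
          dsimp only [F]
          rw [norm_div]
          exact div_le_self (norm_nonneg _)
            (by rw [Real.norm_of_nonneg (by positivity)]; linarith [sq_nonneg x])
      _ ≤ |x / (1 + x ^ 2)| ^ k :=
          norm_inverseTangentIntegral_term_le 2 k (hy.trans (by norm_num))
      _ ≤ (1 / 2) ^ k := pow_le_pow_left₀ (abs_nonneg _) hy k
  have hsum := intervalIntegral.hasSum_integral_of_dominated_convergence (μ := volume)
    (a := 0) (b := 1) (F := F) (fun k _ => (1 / 2 : ℝ) ^ k)
    (fun k => (by dsimp only [F]; fun_prop (disch := exact fun _ => by positivity) :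
      Continuous (F k)).aestronglyMeasurable)
    (fun k => ae_of_all _ fun x _ => hF_bound k x)
    (ae_of_all _ fun _ _ => summable_geometric_two)
    intervalIntegrable_const
    (ae_of_all _ fun x _ => (hasSum_inverseTangentIntegral 2
      ((abs_div_one_add_sq_le x).trans_lt (by norm_num))).div_const _)
  simpa only [hF_integral] using hsum

theorem chen_series_two_integral_rep :
    ((∑' n : ℕ, (-1) ^ n / ((2 * (n : ℝ) + 1) ^ 3 * (Nat.centralBinom n : ℝ)) : ℝ) : ℂ) =
      -2 * Complex.I * ∫ x in (0 : ℝ)..1,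
        (cLi 2 (Complex.I * x / (1 + (x : ℂ) ^ 2))
          - cLi 2 (-(Complex.I * x) / (1 + (x : ℂ) ^ 2))) / (1 + (x : ℂ) ^ 2) := by
  have hintegrand (x : ℝ) :
      (cLi 2 (I * x / (1 + (x : ℂ) ^ 2)) - cLi 2 (-(I * x) / (1 + (x : ℂ) ^ 2))) /
          (1 + (x : ℂ) ^ 2) =
        2 * I * ((inverseTangentIntegral 2 (x / (1 + x ^ 2)) / (1 + x ^ 2) : ℝ) : ℂ) := by
    have key :=
      cLi_I_mul_sub_cLi_neg_I_mul 2 ((abs_div_one_add_sq_le x).trans_lt (by norm_num))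
    push_cast at key ⊢
    rw [neg_div, mul_div_assoc, key]
    ring
  rw [intervalIntegral.integral_congr fun x _ => hintegrand x,
    intervalIntegral.integral_const_mul, intervalIntegral.integral_ofReal,
    ← hasSum_integral_inverseTangentIntegral.tsum_eq, tsum_div_const]
  push_cast
  ring_nf
  rw [I_sq]
  ring
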